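/- arXiv:2109.14926 — 3 statements merged into one kernel-verified Lean document; each statement's English description precedes it below -/
import Mathlib

section
/- Let σ : Λ → ℂ be conjugate-symmetric, Ψ : Z_N² → ℝ strictly positive, q ∈ ℒ₊, and let Δ : Λ → ℂ be conjugate-symmetric. Then the real function t ↦ J(q + tΔ) is differentiable at t = 0 with derivative equal to Σ_{k∈Λ} Δ_k · conj(σ_k) − (1/(N₁N₂)) Σ_{ℓ∈Z_N²} Δ(ζ_ℓ) / (1/Ψ(ℓ) + Q(ζ_ℓ)), where Δ(ζ_ℓ) = Σ_{k∈Λ} Δ_k exp(−i(k₁ζ_{ℓ,1} + k₂ζ_{ℓ,2})). -/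
open Complex BigOperators

noncomputable section

/-- The index set `Λ = {k ∈ ℤ² : |k₁| ≤ n₁, |k₂| ≤ n₂}`. -/
def Lam (n₁ n₂ : ℕ) : Finset (ℤ × ℤ) :=
  Finset.Icc (-(n₁ : ℤ)) (n₁ : ℤ) ×ˢ Finset.Icc (-(n₂ : ℤ)) (n₂ : ℤ)

/-- The discrete grid `Z_N² = {0,…,N₁−1} × {0,…,N₂−1}`. -/
def gridN (N₁ N₂ : ℕ) : Finset (ℕ × ℕ) := Finset.range N₁ ×ˢ Finset.range N₂

/-- The grid point `ζ_ℓ = (2πℓ₁/N₁, 2πℓ₂/N₂)`. -/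
def zeta (N₁ N₂ : ℕ) (ℓ : ℕ × ℕ) : ℝ × ℝ :=
  (2 * Real.pi * ℓ.1 / N₁, 2 * Real.pi * ℓ.2 / N₂)

/-- Conjugate symmetry of coefficients: `q₋ₖ = conj qₖ` for all `k ∈ Λ`. -/
def ConjSym (n₁ n₂ : ℕ) (q : ℤ × ℤ → ℂ) : Prop :=
  ∀ k ∈ Lam n₁ n₂, q (-k) = starRingEnd ℂ (q k)

/-- The trigonometric polynomial `Q(θ) = Σ_{k∈Λ} qₖ exp(−i(k₁θ₁ + k₂θ₂))`. -/
def trigQ (n₁ n₂ : ℕ) (q : ℤ × ℤ → ℂ) (θ : ℝ × ℝ) : ℂ :=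
  ∑ k ∈ Lam n₁ n₂, q k *
    Complex.exp (-Complex.I * (((k.1 : ℝ) * θ.1 + (k.2 : ℝ) * θ.2 : ℝ) : ℂ))

/-- The dual objective `J(q)`, real-valued on the feasible set. -/
def Jdual (n₁ n₂ N₁ N₂ : ℕ) (σ : ℤ × ℤ → ℂ) (Ψ : ℕ × ℕ → ℝ) (q : ℤ × ℤ → ℂ) : ℝ :=
  (∑ k ∈ Lam n₁ n₂, q k * starRingEnd ℂ (σ k)).re -
    (1 / ((N₁ : ℝ) * (N₂ : ℝ))) * ∑ ℓ ∈ gridN N₁ N₂,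
      Real.log (1 / Ψ ℓ + (trigQ n₁ n₂ q (zeta N₁ N₂ ℓ)).re)

/-- Membership in the feasible set `ℒ₊`. -/
def Feas (n₁ n₂ N₁ N₂ : ℕ) (Ψ : ℕ × ℕ → ℝ) (q : ℤ × ℤ → ℂ) : Prop :=
  ConjSym n₁ n₂ q ∧
    ∀ ℓ ∈ gridN N₁ N₂, 0 < 1 / Ψ ℓ + (trigQ n₁ n₂ q (zeta N₁ N₂ ℓ)).re

theorem trigQ_add_mul (n₁ n₂ : ℕ) (q Δ : ℤ × ℤ → ℂ) (c : ℂ) (θ : ℝ × ℝ) :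
    trigQ n₁ n₂ (fun k => q k + c * Δ k) θ = trigQ n₁ n₂ q θ + c * trigQ n₁ n₂ Δ θ := by
  simp only [trigQ, add_mul, Finset.sum_add_distrib, Finset.mul_sum, mul_assoc]

theorem Jdual_add_ofReal_mul (n₁ n₂ N₁ N₂ : ℕ) (σ : ℤ × ℤ → ℂ) (Ψ : ℕ × ℕ → ℝ)
    (q Δ : ℤ × ℤ → ℂ) (t : ℝ) :
    Jdual n₁ n₂ N₁ N₂ σ Ψ (fun k => q k + (t : ℂ) * Δ k) =
      (∑ k ∈ Lam n₁ n₂, q k * starRingEnd ℂ (σ k)).re +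
          t * (∑ k ∈ Lam n₁ n₂, Δ k * starRingEnd ℂ (σ k)).re -
        1 / ((N₁ : ℝ) * (N₂ : ℝ)) * ∑ ℓ ∈ gridN N₁ N₂,
          Real.log ((1 / Ψ ℓ + (trigQ n₁ n₂ q (zeta N₁ N₂ ℓ)).re) +
            t * (trigQ n₁ n₂ Δ (zeta N₁ N₂ ℓ)).re) := by
  simp only [Jdual, trigQ_add_mul, add_mul, Finset.sum_add_distrib, mul_assoc, ← Finset.mul_sum,
    Complex.add_re, Complex.re_ofReal_mul, add_assoc]

theorem hasDerivAt_const_add_mul (a b : ℝ) : HasDerivAt (fun t : ℝ => a + t * b) b 0 := by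
  simpa using ((hasDerivAt_id (0 : ℝ)).mul_const b).const_add a

theorem hasDerivAt_sum_log_add_mul {ι : Type*} (s : Finset ι) (a b : ι → ℝ)
    (ha : ∀ i ∈ s, a i ≠ 0) :
    HasDerivAt (fun t : ℝ => ∑ i ∈ s, Real.log (a i + t * b i)) (∑ i ∈ s, b i / a i) 0 := by
  refine HasDerivAt.fun_sum fun i hi => ?_
  simpa using (hasDerivAt_const_add_mul (a i) (b i)).log (by simpa using ha i hi)

theorem stmt6_general (n₁ n₂ N₁ N₂ : ℕ) (σ : ℤ × ℤ → ℂ) (Ψ : ℕ × ℕ → ℝ)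
    (q : ℤ × ℤ → ℂ) (hq : Feas n₁ n₂ N₁ N₂ Ψ q)
    (Δ : ℤ × ℤ → ℂ) :
    HasDerivAt (fun t : ℝ => Jdual n₁ n₂ N₁ N₂ σ Ψ (fun k => q k + (t : ℂ) * Δ k))
      ((∑ k ∈ Lam n₁ n₂, Δ k * starRingEnd ℂ (σ k)).re -
        (1 / ((N₁ : ℝ) * (N₂ : ℝ))) * ∑ ℓ ∈ gridN N₁ N₂,
          (trigQ n₁ n₂ Δ (zeta N₁ N₂ ℓ)).re /
            (1 / Ψ ℓ + (trigQ n₁ n₂ q (zeta N₁ N₂ ℓ)).re))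
      0 := by
  have hlin := hasDerivAt_const_add_mul (∑ k ∈ Lam n₁ n₂, q k * starRingEnd ℂ (σ k)).re
    (∑ k ∈ Lam n₁ n₂, Δ k * starRingEnd ℂ (σ k)).re
  have hlog := hasDerivAt_sum_log_add_mul (gridN N₁ N₂)
    (fun ℓ => 1 / Ψ ℓ + (trigQ n₁ n₂ q (zeta N₁ N₂ ℓ)).re)
    (fun ℓ => (trigQ n₁ n₂ Δ (zeta N₁ N₂ ℓ)).re) fun ℓ hℓ => (hq.2 ℓ hℓ).ne'
  simp_rw [Jdual_add_ofReal_mul]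
  exact hlin.sub (hlog.const_mul (1 / ((N₁ : ℝ) * (N₂ : ℝ))))

theorem stmt6 (n₁ n₂ N₁ N₂ : ℕ) (hn₁ : 0 < n₁) (hn₂ : 0 < n₂)
    (hN₁ : 0 < N₁) (hN₂ : 0 < N₂)
    (σ : ℤ × ℤ → ℂ) (hσ : ConjSym n₁ n₂ σ)
    (Ψ : ℕ × ℕ → ℝ) (hΨ : ∀ ℓ ∈ gridN N₁ N₂, 0 < Ψ ℓ)
    (q : ℤ × ℤ → ℂ) (hq : Feas n₁ n₂ N₁ N₂ Ψ q)
    (Δ : ℤ × ℤ → ℂ) (hΔ : ConjSym n₁ n₂ Δ) :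
    HasDerivAt (fun t : ℝ => Jdual n₁ n₂ N₁ N₂ σ Ψ (fun k => q k + (t : ℂ) * Δ k))
      ((∑ k ∈ Lam n₁ n₂, Δ k * starRingEnd ℂ (σ k)).re -
        (1 / ((N₁ : ℝ) * (N₂ : ℝ))) * ∑ ℓ ∈ gridN N₁ N₂,
          (trigQ n₁ n₂ Δ (zeta N₁ N₂ ℓ)).re /
            (1 / Ψ ℓ + (trigQ n₁ n₂ q (zeta N₁ N₂ ℓ)).re))
      0 :=
  stmt6_general n₁ n₂ N₁ N₂ σ Ψ q hq Δ

end
end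

section
/- Let σ : Λ → ℂ be conjugate-symmetric and Ψ : Z_N² → ℝ strictly positive, and suppose the grid is fine enough that the only conjugate-symmetric q : Λ → ℂ with Q(ζ_ℓ) = 0 for all ℓ ∈ Z_N² is q = 0. Then the dual objective J is strictly convex on ℒ₊: for all q₁ ≠ q₂ in ℒ₊ and λ ∈ (0,1), J(λq₁ + (1−λ)q₂) < λ J(q₁) + (1−λ) J(q₂). -/
/-!
The linear term of `J` is affine in `q`, and `Q` is linear in `q` and real for conjugate-symmetric
`q`, so `J(q)` is an affine function minus a sum of logarithms of affine functions of `q`. By strict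
concavity of `log` each summand is concave along the segment from `q₁` to `q₂`, and strictly so at
every grid point where `Q₁(ζ_ℓ) ≠ Q₂(ζ_ℓ)`. Such a grid point exists: otherwise `q₁ − q₂` is a
conjugate-symmetric polynomial vanishing on the grid, hence zero by the fineness assumption.
-/

open Complex BigOperators

noncomputable section

theorem StrictConcaveOn.smul_sum_add_smul_sum_lt {ι : Type*} {S : Set ℝ} {f : ℝ → ℝ}
    (hf : StrictConcaveOn ℝ S f) {s : Finset ι} {x y : ι → ℝ}
    (hx : ∀ i ∈ s, x i ∈ S) (hy : ∀ i ∈ s, y i ∈ S) (hxy : ∃ i ∈ s, x i ≠ y i)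
    {a b : ℝ} (ha : 0 < a) (hb : 0 < b) (hab : a + b = 1) :
    a * ∑ i ∈ s, f (x i) + b * ∑ i ∈ s, f (y i) < ∑ i ∈ s, f (a * x i + b * y i) := by
  rw [Finset.mul_sum, Finset.mul_sum, ← Finset.sum_add_distrib]
  refine Finset.sum_lt_sum (fun i hi => hf.concaveOn.2 (hx i hi) (hy i hi) ha.le hb.le hab)
    ?_
  obtain ⟨i, hi, hne⟩ := hxy
  exact ⟨i, hi, hf.2 (hx i hi) (hy i hi) hne ha hb hab⟩

theorem re_sum_ofReal_mul_add_ofReal_mul_mul {ι : Type*} (s : Finset ι) (a b : ℝ)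
    (u v c : ι → ℂ) :
    (∑ i ∈ s, ((a : ℂ) * u i + (b : ℂ) * v i) * c i).re =
      a * (∑ i ∈ s, u i * c i).re + b * (∑ i ∈ s, v i * c i).re := by
  have hsum : ∑ i ∈ s, ((a : ℂ) * u i + (b : ℂ) * v i) * c i =
      a * ∑ i ∈ s, u i * c i + b * ∑ i ∈ s, v i * c i := by
    simp only [Finset.mul_sum, ← Finset.sum_add_distrib]
    exact Finset.sum_congr rfl fun i _ => by ring
  simp [hsum]

section TrigPoly

variable {n₁ n₂ : ℕ}

theorem neg_mem_Lam {k : ℤ × ℤ} (hk : k ∈ Lam n₁ n₂) : -k ∈ Lam n₁ n₂ := by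
  simp only [Lam, Finset.mem_product, Finset.mem_Icc, Prod.fst_neg, Prod.snd_neg] at *
  omega

theorem trigQ_mul_add_mul (a b : ℂ) (q₁ q₂ : ℤ × ℤ → ℂ) (θ : ℝ × ℝ) :
    trigQ n₁ n₂ (fun k => a * q₁ k + b * q₂ k) θ =
      a * trigQ n₁ n₂ q₁ θ + b * trigQ n₁ n₂ q₂ θ := by
  simp only [trigQ, Finset.mul_sum, ← Finset.sum_add_distrib]
  exact Finset.sum_congr rfl fun k _ => by ring

theorem trigQ_sub (q₁ q₂ : ℤ × ℤ → ℂ) (θ : ℝ × ℝ) :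
    trigQ n₁ n₂ (fun k => q₁ k - q₂ k) θ = trigQ n₁ n₂ q₁ θ - trigQ n₁ n₂ q₂ θ := by
  simpa [← sub_eq_add_neg] using trigQ_mul_add_mul (n₁ := n₁) (n₂ := n₂) 1 (-1) q₁ q₂ θ

theorem ConjSym.sub {q₁ q₂ : ℤ × ℤ → ℂ} (h₁ : ConjSym n₁ n₂ q₁) (h₂ : ConjSym n₁ n₂ q₂) :
    ConjSym n₁ n₂ (fun k => q₁ k - q₂ k) := fun k hk => by
  simp only [h₁ k hk, h₂ k hk, map_sub]

theorem ConjSym.conj_trigQ {q : ℤ × ℤ → ℂ} (hq : ConjSym n₁ n₂ q) (θ : ℝ × ℝ) :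
    starRingEnd ℂ (trigQ n₁ n₂ q θ) = trigQ n₁ n₂ q θ := by
  rw [trigQ, map_sum]
  refine Finset.sum_equiv (Equiv.neg (ℤ × ℤ))
    (fun k => ⟨neg_mem_Lam, fun hk => by simpa using neg_mem_Lam hk⟩) (fun k hk => ?_)
  rw [Equiv.neg_apply, map_mul, hq k hk, ← Complex.exp_conj]
  congr 2
  simp only [Prod.fst_neg, Prod.snd_neg, Int.cast_neg, map_mul, map_neg,
    Complex.conj_I, Complex.conj_ofReal]
  push_cast
  ring

theorem ConjSym.trigQ_eq_zero_of_re_eq_zero {q : ℤ × ℤ → ℂ} (hq : ConjSym n₁ n₂ q)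
    {θ : ℝ × ℝ} (h : (trigQ n₁ n₂ q θ).re = 0) : trigQ n₁ n₂ q θ = 0 := by
  rw [← Complex.conj_eq_iff_re.mp (hq.conj_trigQ θ), h, Complex.ofReal_zero]

theorem exists_mem_gridN_re_trigQ_ne {N₁ N₂ : ℕ}
    (hfine : ∀ q : ℤ × ℤ → ℂ, ConjSym n₁ n₂ q →
      (∀ ℓ ∈ gridN N₁ N₂, trigQ n₁ n₂ q (zeta N₁ N₂ ℓ) = 0) → ∀ k ∈ Lam n₁ n₂, q k = 0)
    {q₁ q₂ : ℤ × ℤ → ℂ} (h₁ : ConjSym n₁ n₂ q₁) (h₂ : ConjSym n₁ n₂ q₂)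
    (hne : ∃ k ∈ Lam n₁ n₂, q₁ k ≠ q₂ k) :
    ∃ ℓ ∈ gridN N₁ N₂,
      (trigQ n₁ n₂ q₁ (zeta N₁ N₂ ℓ)).re ≠ (trigQ n₁ n₂ q₂ (zeta N₁ N₂ ℓ)).re := by
  contrapose! hne
  intro k hk
  refine sub_eq_zero.mp (hfine _ (h₁.sub h₂) (fun ℓ hℓ => ?_) k hk)
  refine (h₁.sub h₂).trigQ_eq_zero_of_re_eq_zero ?_
  rw [trigQ_sub, Complex.sub_re, hne ℓ hℓ, sub_self]

end TrigPoly

theorem stmt9_general (n₁ n₂ N₁ N₂ : ℕ)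
    (hN₁ : 0 < N₁) (hN₂ : 0 < N₂)
    (σ : ℤ × ℤ → ℂ)
    (Ψ : ℕ × ℕ → ℝ)
    -- the grid is fine enough: a conjugate-symmetric trigonometric polynomial
    -- vanishing on the whole grid has zero coefficients
    (hfine : ∀ q : ℤ × ℤ → ℂ, ConjSym n₁ n₂ q →
      (∀ ℓ ∈ gridN N₁ N₂, trigQ n₁ n₂ q (zeta N₁ N₂ ℓ) = 0) →
      ∀ k ∈ Lam n₁ n₂, q k = 0)
    (q₁ q₂ : ℤ × ℤ → ℂ)
    (hq₁ : Feas n₁ n₂ N₁ N₂ Ψ q₁) (hq₂ : Feas n₁ n₂ N₁ N₂ Ψ q₂)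
    (hne : ∃ k ∈ Lam n₁ n₂, q₁ k ≠ q₂ k)
    (lam : ℝ) (hlam : lam ∈ Set.Ioo (0 : ℝ) 1) :
    Jdual n₁ n₂ N₁ N₂ σ Ψ (fun k => (lam : ℂ) * q₁ k + ((1 - lam : ℝ) : ℂ) * q₂ k) <
      lam * Jdual n₁ n₂ N₁ N₂ σ Ψ q₁ + (1 - lam) * Jdual n₁ n₂ N₁ N₂ σ Ψ q₂ := by
  obtain ⟨hlam₀, hlam₁⟩ := hlam
  set a : (ℤ × ℤ → ℂ) → ℕ × ℕ → ℝ := fun q ℓ => 1 / Ψ ℓ + (trigQ n₁ n₂ q (zeta N₁ N₂ ℓ)).re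
  have ha_comb : ∀ ℓ, a (fun k => (lam : ℂ) * q₁ k + ((1 - lam : ℝ) : ℂ) * q₂ k) ℓ =
      lam * a q₁ ℓ + (1 - lam) * a q₂ ℓ := fun ℓ => by
    simp only [a, trigQ_mul_add_mul, Complex.add_re, Complex.re_ofReal_mul]
    ring
  have hlog : lam * ∑ ℓ ∈ gridN N₁ N₂, Real.log (a q₁ ℓ) +
      (1 - lam) * ∑ ℓ ∈ gridN N₁ N₂, Real.log (a q₂ ℓ) <
      ∑ ℓ ∈ gridN N₁ N₂, Real.log (lam * a q₁ ℓ + (1 - lam) * a q₂ ℓ) := by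
    obtain ⟨ℓ, hℓ, hre⟩ := exists_mem_gridN_re_trigQ_ne hfine hq₁.1 hq₂.1 hne
    exact strictConcaveOn_log_Ioi.smul_sum_add_smul_sum_lt hq₁.2 hq₂.2
      ⟨ℓ, hℓ, fun h => hre (add_left_cancel h)⟩ hlam₀ (by linarith) (by ring)
  have hc : (0 : ℝ) < 1 / ((N₁ : ℝ) * (N₂ : ℝ)) := by positivity
  simp only [a] at ha_comb hlog
  simp only [Jdual, re_sum_ofReal_mul_add_ofReal_mul_mul, ha_comb]
  nlinarith

theorem stmt9 (n₁ n₂ N₁ N₂ : ℕ) (hn₁ : 0 < n₁) (hn₂ : 0 < n₂)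
    (hN₁ : 0 < N₁) (hN₂ : 0 < N₂)
    (σ : ℤ × ℤ → ℂ) (hσ : ConjSym n₁ n₂ σ)
    (Ψ : ℕ × ℕ → ℝ) (hΨ : ∀ ℓ ∈ gridN N₁ N₂, 0 < Ψ ℓ)
    -- the grid is fine enough: a conjugate-symmetric trigonometric polynomial
    -- vanishing on the whole grid has zero coefficients
    (hfine : ∀ q : ℤ × ℤ → ℂ, ConjSym n₁ n₂ q →
      (∀ ℓ ∈ gridN N₁ N₂, trigQ n₁ n₂ q (zeta N₁ N₂ ℓ) = 0) →
      ∀ k ∈ Lam n₁ n₂, q k = 0)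
    (q₁ q₂ : ℤ × ℤ → ℂ)
    (hq₁ : Feas n₁ n₂ N₁ N₂ Ψ q₁) (hq₂ : Feas n₁ n₂ N₁ N₂ Ψ q₂)
    (hne : ∃ k ∈ Lam n₁ n₂, q₁ k ≠ q₂ k)
    (lam : ℝ) (hlam : lam ∈ Set.Ioo (0 : ℝ) 1) :
    Jdual n₁ n₂ N₁ N₂ σ Ψ (fun k => (lam : ℂ) * q₁ k + ((1 - lam : ℝ) : ℂ) * q₂ k) <
      lam * Jdual n₁ n₂ N₁ N₂ σ Ψ q₁ + (1 - lam) * Jdual n₁ n₂ N₁ N₂ σ Ψ q₂ :=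
  stmt9_general n₁ n₂ N₁ N₂ hN₁ hN₂ σ Ψ hfine q₁ q₂ hq₁ hq₂ hne lam hlam

end
end

section
/- Let Ψ : Z_N² → ℝ be strictly positive and suppose the covariance data σ : Λ → ℂ is generated by a strictly positive spectrum, i.e. there exists Φ₀ : Z_N² → ℝ with Φ₀ > 0 such that σ_k = (1/(N₁N₂)) Σ_{ℓ∈Z_N²} exp(i(k₁ζ_{ℓ,1} + k₂ζ_{ℓ,2})) Φ₀(ℓ) for all k ∈ Λ. Then the dual objective J attains its infimum on ℒ₊: there exists q̂ ∈ ℒ₊ with J(q̂) ≤ J(q) for all q ∈ ℒ₊. -/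
open Complex BigOperators

noncomputable section

/-- The discrete Itakura–Saito pseudodistance between `Φ` and `Ψ` on the grid. -/
def DIS (N₁ N₂ : ℕ) (Φ Ψ : ℕ × ℕ → ℝ) : ℝ :=
  (1 / ((N₁ : ℝ) * (N₂ : ℝ))) *
    ∑ ℓ ∈ gridN N₁ N₂, (Real.log (Ψ ℓ / Φ ℓ) + (Φ ℓ - Ψ ℓ) / Ψ ℓ)

/-- `Φ` satisfies the moment equations for covariance data `σ`. -/
def MomentEq (n₁ n₂ N₁ N₂ : ℕ) (σ : ℤ × ℤ → ℂ) (Φ : ℕ × ℕ → ℝ) : Prop :=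
  ∀ k ∈ Lam n₁ n₂,
    σ k = ((1 / ((N₁ : ℝ) * (N₂ : ℝ)) : ℝ) : ℂ) * ∑ ℓ ∈ gridN N₁ N₂,
      Complex.exp (Complex.I *
        (((k.1 : ℝ) * (zeta N₁ N₂ ℓ).1 + (k.2 : ℝ) * (zeta N₁ N₂ ℓ).2 : ℝ) : ℂ)) *
        ((Φ ℓ : ℝ) : ℂ)

/-- The spectrum `Φ̂ = (Ψ⁻¹ + Q̂)⁻¹` associated with dual variable `q`. -/
def PhiHat (n₁ n₂ N₁ N₂ : ℕ) (Ψ : ℕ × ℕ → ℝ) (q : ℤ × ℤ → ℂ) : ℕ × ℕ → ℝ :=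
  fun ℓ => 1 / (1 / Ψ ℓ + (trigQ n₁ n₂ q (zeta N₁ N₂ ℓ)).re)

/-!
Via the moment equations the linear term of `J` is `(N₁N₂)⁻¹ ∑ₗ Φ₀(ℓ) Q(ζₗ)`, so up to a positive
factor and an additive constant `J(q) = ∑ₗ (Φ₀(ℓ) yₗ - log yₗ)` with `yₗ = 1/Ψ(ℓ) + Q(ζₗ)`. The
values `y` range over a translate of a linear subspace of `ℝ^{Z_N²}`, hence a closed set, and the
function `∑ₗ (pₗ yₗ - log yₗ)` with all `pₗ > 0` is coercive on the positive orthant: it blows up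
both as some `yₗ → 0` and as some `yₗ → ∞`. A minimum therefore exists on a compact sublevel set.
-/

lemma Real.log_le_mul_sub_one_sub_log {a t : ℝ} (ha : 0 < a) (ht : 0 < t) :
    Real.log t ≤ a * t - 1 - Real.log a := by
  have h := Real.log_le_sub_one_of_pos (mul_pos ha ht)
  rw [Real.log_mul ha.ne' ht.ne'] at h
  linarith

lemma Real.one_add_log_le_mul_sub_log {p t : ℝ} (hp : 0 < p) (ht : 0 < t) :
    1 + Real.log p ≤ p * t - Real.log t := by
  linarith [Real.log_le_mul_sub_one_sub_log hp ht]

lemma Real.mem_Icc_of_mul_sub_log_le {p t D : ℝ} (hp : 0 < p) (ht : 0 < t)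
    (hD : p * t - Real.log t ≤ D) :
    t ∈ Set.Icc (Real.exp (-D)) (2 * (D - 1 - Real.log (p / 2)) / p) := by
  constructor
  · rw [← Real.le_log_iff_exp_le ht]
    linarith [mul_pos hp ht]
  · rw [le_div_iff₀ hp]
    linarith [Real.log_le_mul_sub_one_sub_log (half_pos hp) ht]

def linSubLog {ι : Type*} [Fintype ι] (p y : ι → ℝ) : ℝ :=
  ∑ i, (p i * y i - Real.log (y i))

theorem exists_isMinOn_linSubLog {ι : Type*} [Fintype ι] {p : ι → ℝ} (hp : ∀ i, 0 < p i)
    {T : Set (ι → ℝ)} (hT : IsClosed T) (hne : (T ∩ {y | ∀ i, 0 < y i}).Nonempty) :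
    ∃ y ∈ T ∩ {y | ∀ i, 0 < y i}, IsMinOn (linSubLog p) (T ∩ {y | ∀ i, 0 < y i}) y := by
  obtain ⟨y₀, hy₀⟩ := hne
  -- each term is at least `1 + log pᵢ`, so a sublevel bound bounds every single term
  set D : ι → ℝ := fun i => linSubLog p y₀ - ∑ j, (1 + Real.log (p j)) + (1 + Real.log (p i))
  set K := T ∩ Set.univ.pi fun i =>
    Set.Icc (Real.exp (-D i)) (2 * (D i - 1 - Real.log (p i / 2)) / p i)
  have hsub : ∀ y ∈ T ∩ {y | ∀ i, 0 < y i}, linSubLog p y ≤ linSubLog p y₀ → y ∈ K := by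
    rintro y ⟨hyT, hy⟩ hle
    refine ⟨hyT, fun i _ => Real.mem_Icc_of_mul_sub_log_le (hp i) (hy i) ?_⟩
    have := Finset.single_le_sum (f := fun j => p j * y j - Real.log (y j) - (1 + Real.log (p j)))
      (fun j _ => sub_nonneg.2 (Real.one_add_log_le_mul_sub_log (hp j) (hy j))) (Finset.mem_univ i)
    rw [Finset.sum_sub_distrib] at this
    simp only [D, linSubLog] at hle ⊢
    linarith
  have hKpos : K ⊆ T ∩ {y | ∀ i, 0 < y i} :=
    fun y hy => ⟨hy.1, fun i => (Real.exp_pos _).trans_le (hy.2 i (Set.mem_univ i)).1⟩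
  have hK : IsCompact K := (isCompact_univ_pi fun i => isCompact_Icc).inter_left hT
  have hcont : ContinuousOn (linSubLog p) K :=
    continuousOn_finsetSum _ fun i _ =>
      (continuous_const.mul (continuous_apply i)).continuousOn.sub
        ((continuous_apply i).continuousOn.log fun y hy => ((hKpos hy).2 i).ne')
  obtain ⟨y, hyK, hmin⟩ := hK.exists_isMinOn ⟨y₀, hsub y₀ hy₀ le_rfl⟩ hcont
  refine ⟨y, hKpos hyK, fun z hz => ?_⟩
  rcases le_total (linSubLog p z) (linSubLog p y₀) with h | h
  · exact hmin (hsub z hz h)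
  · exact (hmin (hsub y₀ hy₀ le_rfl)).trans h

def conjSymSubmodule (n₁ n₂ : ℕ) : Submodule ℝ (ℤ × ℤ → ℂ) where
  carrier := {q | ConjSym n₁ n₂ q}
  zero_mem' k _ := by simp
  add_mem' {q r} hq hr k hk := by simp [hq k hk, hr k hk]
  smul_mem' t q hq k hk := by simp [hq k hk, Complex.real_smul]

def trigQReLinear (n₁ n₂ N₁ N₂ : ℕ) : (ℤ × ℤ → ℂ) →ₗ[ℝ] (gridN N₁ N₂ → ℝ) where
  toFun q ℓ := (trigQ n₁ n₂ q (zeta N₁ N₂ ℓ)).re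
  map_add' q r := by ext ℓ; simp [trigQ, add_mul, Finset.sum_add_distrib]
  map_smul' t q := by ext ℓ; simp [trigQ, Complex.real_smul, mul_assoc, ← Finset.mul_sum]

def invPhiHat (n₁ n₂ N₁ N₂ : ℕ) (Ψ : ℕ × ℕ → ℝ) (q : ℤ × ℤ → ℂ) : gridN N₁ N₂ → ℝ :=
  fun ℓ => 1 / Ψ ℓ + (trigQ n₁ n₂ q (zeta N₁ N₂ ℓ)).re

lemma isClosed_invPhiHat_image_conjSym (n₁ n₂ N₁ N₂ : ℕ) (Ψ : ℕ × ℕ → ℝ) :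
    IsClosed (invPhiHat n₁ n₂ N₁ N₂ Ψ '' {q | ConjSym n₁ n₂ q}) := by
  have h : invPhiHat n₁ n₂ N₁ N₂ Ψ '' {q | ConjSym n₁ n₂ q} =
      Homeomorph.addLeft (fun ℓ : gridN N₁ N₂ => 1 / Ψ ℓ) ''
        ((conjSymSubmodule n₁ n₂).map (trigQReLinear n₁ n₂ N₁ N₂) : Set _) := by
    rw [Submodule.map_coe, Set.image_image]
    rfl
  rw [h, Homeomorph.isClosed_image]
  exact Submodule.closed_of_finiteDimensional _

lemma conj_eq_of_momentEq {n₁ n₂ N₁ N₂ : ℕ} {σ : ℤ × ℤ → ℂ} {Φ : ℕ × ℕ → ℝ}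
    (hmom : MomentEq n₁ n₂ N₁ N₂ σ Φ) {k : ℤ × ℤ} (hk : k ∈ Lam n₁ n₂) :
    starRingEnd ℂ (σ k) = ((1 / ((N₁ : ℝ) * (N₂ : ℝ)) : ℝ) : ℂ) * ∑ ℓ ∈ gridN N₁ N₂,
      Complex.exp (-Complex.I *
        (((k.1 : ℝ) * (zeta N₁ N₂ ℓ).1 + (k.2 : ℝ) * (zeta N₁ N₂ ℓ).2 : ℝ) : ℂ)) *
        ((Φ ℓ : ℝ) : ℂ) := by
  simp only [hmom k hk, map_mul, map_sum, Complex.conj_ofReal, ← Complex.exp_conj, Complex.conj_I,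
    neg_mul]

lemma re_sum_mul_conj_eq_of_momentEq {n₁ n₂ N₁ N₂ : ℕ} {σ : ℤ × ℤ → ℂ} {Φ : ℕ × ℕ → ℝ}
    (hmom : MomentEq n₁ n₂ N₁ N₂ σ Φ) (q : ℤ × ℤ → ℂ) :
    (∑ k ∈ Lam n₁ n₂, q k * starRingEnd ℂ (σ k)).re =
      1 / ((N₁ : ℝ) * (N₂ : ℝ)) * ∑ ℓ ∈ gridN N₁ N₂, Φ ℓ * (trigQ n₁ n₂ q (zeta N₁ N₂ ℓ)).re := by
  have h : ∑ k ∈ Lam n₁ n₂, q k * starRingEnd ℂ (σ k) =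
      ((1 / ((N₁ : ℝ) * (N₂ : ℝ)) : ℝ) : ℂ) * ∑ ℓ ∈ gridN N₁ N₂,
        ((Φ ℓ : ℝ) : ℂ) * trigQ n₁ n₂ q (zeta N₁ N₂ ℓ) := by
    rw [Finset.sum_congr rfl fun k hk => by rw [conj_eq_of_momentEq hmom hk]]
    simp only [trigQ, Finset.mul_sum]
    rw [Finset.sum_comm]
    exact Finset.sum_congr rfl fun ℓ _ => Finset.sum_congr rfl fun k _ => by ring
  simp [h, Complex.re_sum]

lemma Jdual_eq_linSubLog {n₁ n₂ N₁ N₂ : ℕ} {σ : ℤ × ℤ → ℂ} {Φ : ℕ × ℕ → ℝ}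
    (hmom : MomentEq n₁ n₂ N₁ N₂ σ Φ) (Ψ : ℕ × ℕ → ℝ) (q : ℤ × ℤ → ℂ) :
    Jdual n₁ n₂ N₁ N₂ σ Ψ q = 1 / ((N₁ : ℝ) * (N₂ : ℝ)) *
      (linSubLog (fun ℓ : gridN N₁ N₂ => Φ ℓ) (invPhiHat n₁ n₂ N₁ N₂ Ψ q) -
        ∑ ℓ ∈ gridN N₁ N₂, Φ ℓ / Ψ ℓ) := by
  rw [Jdual, re_sum_mul_conj_eq_of_momentEq hmom, ← mul_sub]
  unfold linSubLog invPhiHat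
  rw [Finset.sum_coe_sort (gridN N₁ N₂) fun ℓ =>
    Φ ℓ * (1 / Ψ ℓ + (trigQ n₁ n₂ q (zeta N₁ N₂ ℓ)).re) -
      Real.log (1 / Ψ ℓ + (trigQ n₁ n₂ q (zeta N₁ N₂ ℓ)).re)]
  simp only [mul_add, Finset.sum_sub_distrib, Finset.sum_add_distrib, mul_one_div]
  ring

theorem stmt14_general (n₁ n₂ N₁ N₂ : ℕ)
    (σ : ℤ × ℤ → ℂ)
    (Ψ : ℕ × ℕ → ℝ) (hΨ : ∀ ℓ ∈ gridN N₁ N₂, 0 < Ψ ℓ)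
    -- the covariance data is generated by a strictly positive spectrum Φ₀
    (Φ₀ : ℕ × ℕ → ℝ) (hΦ₀ : ∀ ℓ ∈ gridN N₁ N₂, 0 < Φ₀ ℓ)
    (hmom₀ : MomentEq n₁ n₂ N₁ N₂ σ Φ₀) :
    ∃ qhat : ℤ × ℤ → ℂ, Feas n₁ n₂ N₁ N₂ Ψ qhat ∧
      ∀ q : ℤ × ℤ → ℂ, Feas n₁ n₂ N₁ N₂ Ψ q →
        Jdual n₁ n₂ N₁ N₂ σ Ψ qhat ≤ Jdual n₁ n₂ N₁ N₂ σ Ψ q := by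
  have hzero : invPhiHat n₁ n₂ N₁ N₂ Ψ 0 ∈ invPhiHat n₁ n₂ N₁ N₂ Ψ '' {q | ConjSym n₁ n₂ q} ∩
      {y | ∀ ℓ, 0 < y ℓ} :=
    ⟨⟨0, fun k _ => by simp, rfl⟩, fun ℓ => by simpa [invPhiHat, trigQ] using hΨ ℓ ℓ.2⟩
  obtain ⟨_, ⟨⟨qhat, hqhat, rfl⟩, hpos⟩, hmin⟩ :=
    exists_isMinOn_linSubLog (p := fun ℓ : gridN N₁ N₂ => Φ₀ ℓ) (fun ℓ => hΦ₀ ℓ ℓ.2)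
      (isClosed_invPhiHat_image_conjSym n₁ n₂ N₁ N₂ Ψ) ⟨_, hzero⟩
  refine ⟨qhat, ⟨hqhat, fun ℓ hℓ => hpos ⟨ℓ, hℓ⟩⟩, fun q hq => ?_⟩
  rw [Jdual_eq_linSubLog hmom₀, Jdual_eq_linSubLog hmom₀]
  gcongr
  exact hmin ⟨⟨q, hq.1, rfl⟩, fun ℓ => hq.2 ℓ ℓ.2⟩

theorem stmt14 (n₁ n₂ N₁ N₂ : ℕ) (hn₁ : 0 < n₁) (hn₂ : 0 < n₂)
    (hN₁ : 0 < N₁) (hN₂ : 0 < N₂)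
    (σ : ℤ × ℤ → ℂ) (hσ : ConjSym n₁ n₂ σ)
    (Ψ : ℕ × ℕ → ℝ) (hΨ : ∀ ℓ ∈ gridN N₁ N₂, 0 < Ψ ℓ)
    -- the covariance data is generated by a strictly positive spectrum Φ₀
    (Φ₀ : ℕ × ℕ → ℝ) (hΦ₀ : ∀ ℓ ∈ gridN N₁ N₂, 0 < Φ₀ ℓ)
    (hmom₀ : MomentEq n₁ n₂ N₁ N₂ σ Φ₀) :
    ∃ qhat : ℤ × ℤ → ℂ, Feas n₁ n₂ N₁ N₂ Ψ qhat ∧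
      ∀ q : ℤ × ℤ → ℂ, Feas n₁ n₂ N₁ N₂ Ψ q →
        Jdual n₁ n₂ N₁ N₂ σ Ψ qhat ≤ Jdual n₁ n₂ N₁ N₂ σ Ψ q :=
  stmt14_general n₁ n₂ N₁ N₂ σ Ψ hΨ Φ₀ hΦ₀ hmom₀
end
end
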